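/- arXiv:1710.03506 — 2 statements merged into one kernel-verified Lean document; each statement's English description precedes it below -/
import Mathlib

section
/- Let $x_t$ be as above, and define $y_t=ac\int_0^t x_s^2\,\frac{e^{-q_-(t-s)}-e^{-q_+(t-s)}}{q_+-q_-}\,ds$. Then $y$ solves $y''+(b+c+d)y'+(b(c+d)-ac)y=ac\,x_t^2$ with $y_0=0$, $y_0'=0$, and $y_t\to \frac{\nu}{(1-\nu)^3}$ as $t\to\infty$, where $\nu=ac/(b(c+d))$. -/
open Real MeasureTheory Filter Topology Set

/-!
The kernel $(e^{-q_- u} - e^{-q_+ u})/(q_+ - q_-)$ is the impulse response of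
$(D + q_-)(D + q_+) = D^2 + (b+c+d)D + (b(c+d) - ac)$ (Vieta). So $y$ is a combination of the
first-order convolutions $E_q f(t) = \int_0^t f(s) e^{-q(t-s)}\,ds$, which solve $E' = f - qE$,
and the second-order equation follows. By dominated convergence $E_q f(t) \to L/q$ whenever
$f \to L$. Reversing time puts $x$ in the same form with $f = 1$, so $x_t \to 1 + ac/(q_-q_+)
= 1/(1-\nu)$, and then $y_t \to ac\,x_\infty^2/(q_-q_+) = \nu/(1-\nu)^3$.
-/

theorem Continuous.exists_forall_abs_le_of_tendsto {f : ℝ → ℝ} {L : ℝ} (hf : Continuous f)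
    (hL : Tendsto f atTop (𝓝 L)) (a : ℝ) : ∃ M, ∀ u ≥ a, |f u| ≤ M := by
  obtain ⟨s, hs, hbdd⟩ := Metric.exists_isBounded_image_of_tendsto hL
  obtain ⟨T, hT⟩ := mem_atTop_sets.1 hs
  have hcpt := (isCompact_Icc (a := a) (b := T)).image hf
  obtain ⟨M, hM⟩ := isBounded_iff_forall_norm_le.1 (hcpt.isBounded.union hbdd)
  refine ⟨M, fun u hu => hM _ ?_⟩
  rcases le_total u T with h | h
  · exact Or.inl ⟨u, ⟨hu, h⟩, rfl⟩
  · exact Or.inr ⟨u, hT u h, rfl⟩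

noncomputable def expConv (q : ℝ) (f : ℝ → ℝ) (t : ℝ) : ℝ :=
  ∫ s in (0:ℝ)..t, f s * exp (-q * (t - s))

theorem expConv_eq_exp_mul_integral (q : ℝ) (f : ℝ → ℝ) (t : ℝ) :
    expConv q f t = exp (-q * t) * ∫ s in (0:ℝ)..t, f s * exp (q * s) := by
  rw [expConv, ← intervalIntegral.integral_const_mul]
  congr 1 with s
  rw [show -q * (t - s) = -q * t + q * s by ring, exp_add]
  ring

theorem expConv_zero (q : ℝ) (f : ℝ → ℝ) : expConv q f 0 = 0 :=
  intervalIntegral.integral_same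

theorem expConv_eq_integral_comp_sub (q : ℝ) (f : ℝ → ℝ) (t : ℝ) :
    expConv q f t = ∫ s in (0:ℝ)..t, f (t - s) * exp (-q * s) := by
  have := intervalIntegral.integral_comp_sub_left (fun s => f s * exp (-q * (t - s))) t
    (a := 0) (b := t)
  simp only [sub_self, sub_zero, sub_sub_cancel] at this
  exact this.symm

section
variable {f : ℝ → ℝ}

theorem hasDerivAt_expConv (hf : Continuous f) (q t : ℝ) :
    HasDerivAt (expConv q f) (f t - q * expConv q f t) t := by
  have hprim : HasDerivAt (fun u => ∫ s in (0:ℝ)..u, f s * exp (q * s)) (f t * exp (q * t)) t :=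
    ((hf.mul (by fun_prop)).integral_hasStrictDerivAt 0 t).hasDerivAt
  have hexp : HasDerivAt (fun u => exp (-q * u)) (exp (-q * t) * -q) t := by
    simpa using ((hasDerivAt_id t).const_mul (-q)).exp
  have hinv : exp (-q * t) * exp (q * t) = 1 := by rw [← exp_add]; simp
  rw [funext (expConv_eq_exp_mul_integral q f)]
  refine (hexp.mul hprim).congr_deriv ?_
  beta_reduce
  linear_combination f t * hinv

theorem continuous_expConv (hf : Continuous f) (q : ℝ) : Continuous (expConv q f) :=
  continuous_iff_continuousAt.2 fun t => (hasDerivAt_expConv hf q t).continuousAt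

theorem tendsto_expConv {q L : ℝ} (hq : 0 < q) (hf : Continuous f)
    (hL : Tendsto f atTop (𝓝 L)) : Tendsto (expConv q f) atTop (𝓝 (L / q)) := by
  obtain ⟨M, hM⟩ := hf.exists_forall_abs_le_of_tendsto hL 0
  set F : ℝ → ℝ → ℝ := fun t => (Iic t).indicator fun s => f (t - s) * exp (-q * s)
  have hF : ∀ t ≥ 0, expConv q f t = ∫ s in Ioi 0, F t s := by
    intro t ht
    rw [expConv_eq_integral_comp_sub, intervalIntegral.integral_of_le ht,
      integral_indicator measurableSet_Iic, Measure.restrict_restrict measurableSet_Iic,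
      Iic_inter_Ioi]
  have hlim : ∫ s in Ioi 0, L * exp (-q * s) = L / q := by
    rw [integral_const_mul, integral_exp_mul_Ioi (neg_lt_zero.2 hq)]
    simp [field]
  rw [← hlim]
  refine Tendsto.congr' (eventually_atTop.2 ⟨0, fun t ht => (hF t ht).symm⟩) ?_
  refine tendsto_integral_filter_of_dominated_convergence (fun s => M * exp (-q * s))
    (Eventually.of_forall fun t => ?_) (Eventually.of_forall fun t => ?_)
    ((exp_neg_integrableOn_Ioi 0 hq).const_mul M) (Eventually.of_forall fun s => ?_)
  · exact ((by fun_prop : Continuous fun s => f (t - s) * exp (-q * s)).aestronglyMeasurable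
      ).indicator measurableSet_Iic
  · refine ae_restrict_of_forall_mem measurableSet_Ioi fun s _ => ?_
    by_cases hst : s ≤ t
    · simp only [F, indicator_of_mem (show s ∈ Iic t from hst), norm_mul, norm_eq_abs,
        abs_of_pos (exp_pos _)]
      exact mul_le_mul_of_nonneg_right (hM _ (sub_nonneg.2 hst)) (exp_pos _).le
    · simp only [F, indicator_of_notMem (show s ∉ Iic t from hst), norm_zero]
      exact mul_nonneg ((abs_nonneg _).trans (hM 0 le_rfl)) (exp_pos _).le
  · have hshift : Tendsto (fun t => f (t - s) * exp (-q * s)) atTop (𝓝 (L * exp (-q * s))) :=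
      (hL.comp (tendsto_atTop_add_const_right _ (-s) tendsto_id)).mul_const _
    refine hshift.congr' (eventually_atTop.2 ⟨s, fun t ht => ?_⟩)
    simp [F, indicator_of_mem (show s ∈ Iic t from ht)]

theorem integral_mul_exp_combination_eq_expConv (hf : Continuous f) (α β p q δ t : ℝ) :
    ∫ s in (0:ℝ)..t, f s * ((α * exp (-p * (t - s)) + β * exp (-q * (t - s))) / δ)
      = (α * expConv p f t + β * expConv q f t) / δ := by
  have hint : ∀ r : ℝ, IntervalIntegrable (fun s => f s * exp (-r * (t - s))) volume 0 t :=
    fun r => (hf.mul (by fun_prop)).intervalIntegrable 0 t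
  simp only [expConv, ← intervalIntegral.integral_const_mul, ← intervalIntegral.integral_div,
    ← intervalIntegral.integral_add ((hint p).const_mul α) ((hint q).const_mul β)]
  congr 1 with s
  ring

theorem integral_mul_exp_sub_exp_div_eq_expConv (hf : Continuous f) (p q t : ℝ) :
    ∫ s in (0:ℝ)..t, f s * ((exp (-p * (t - s)) - exp (-q * (t - s))) / (q - p))
      = (expConv p f t - expConv q f t) / (q - p) := by
  simpa only [one_mul, neg_one_mul, ← sub_eq_add_neg] using
    integral_mul_exp_combination_eq_expConv hf 1 (-1) p q (q - p) t

variable {p q : ℝ}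

theorem hasDerivAt_expConv_sub_div (hf : Continuous f) (t : ℝ) :
    HasDerivAt (fun t => (expConv p f t - expConv q f t) / (q - p))
      ((-p * expConv p f t + q * expConv q f t) / (q - p)) t := by
  refine (((hasDerivAt_expConv hf p t).sub (hasDerivAt_expConv hf q t)).div_const _).congr_deriv ?_
  ring

theorem hasDerivAt_neg_mul_expConv_add_div (hf : Continuous f) (hpq : p ≠ q) (t : ℝ) :
    HasDerivAt (fun t => (-p * expConv p f t + q * expConv q f t) / (q - p))
      (f t - (p + q) * ((-p * expConv p f t + q * expConv q f t) / (q - p))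
        - p * q * ((expConv p f t - expConv q f t) / (q - p))) t := by
  refine ((((hasDerivAt_expConv hf p t).const_mul (-p)).add
    ((hasDerivAt_expConv hf q t).const_mul q)).div_const _).congr_deriv ?_
  field_simp [sub_ne_zero.2 hpq.symm]
  ring

theorem tendsto_expConv_sub_div {L : ℝ} (hp : 0 < p) (hq : 0 < q) (hpq : p ≠ q)
    (hf : Continuous f) (hL : Tendsto f atTop (𝓝 L)) :
    Tendsto (fun t => (expConv p f t - expConv q f t) / (q - p)) atTop (𝓝 (L / (p * q))) := by
  convert ((tendsto_expConv hp hf hL).sub (tendsto_expConv hq hf hL)).div_const (q - p) using 2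
  field_simp [sub_ne_zero.2 hpq.symm]

end

theorem integral_exp_sub_exp_div_eq_expConv (p q t : ℝ) :
    ∫ s in (0:ℝ)..t, (exp (-p * s) - exp (-q * s)) / (q - p)
      = (expConv p 1 t - expConv q 1 t) / (q - p) := by
  have hrev := intervalIntegral.integral_comp_sub_left
    (fun s => (exp (-p * s) - exp (-q * s)) / (q - p)) t (a := 0) (b := t)
  simp only [sub_self, sub_zero] at hrev
  simpa only [Pi.one_apply, one_mul, hrev] using
    integral_mul_exp_sub_exp_div_eq_expConv continuous_one p q t

theorem add_eq_and_mul_eq_of_roots {R : Type*} [CommRing R] [IsDomain R] {p q s r : R}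
    (hpq : p ≠ q) (hp : p ^ 2 - s * p + r = 0) (hq : q ^ 2 - s * q + r = 0) :
    p + q = s ∧ p * q = r := by
  have hsum : p + q = s := by
    have h : (q - p) * (p + q - s) = 0 := by linear_combination hq - hp
    exact sub_eq_zero.1 ((mul_eq_zero.1 h).resolve_left (sub_ne_zero.2 hpq.symm))
  exact ⟨hsum, by linear_combination p * hsum - hp⟩

theorem branching_variance_ode_general (a b c d qm qp : ℝ) (hb : 0 < b) (hc : 0 < c)
    (hd : 0 ≤ d) (hstab : a * c < b * (c + d))
    (hqm : qm ^ 2 - (b + c + d) * qm + (b * (c + d) - a * c) = 0)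
    (hqp : qp ^ 2 - (b + c + d) * qp + (b * (c + d) - a * c) = 0)
    (hqmpos : 0 < qm) (hqppos : 0 < qp) (hlt : qm < qp) :
    let x : ℝ → ℝ := fun t => 1 + a * c *
      ∫ s in (0:ℝ)..t, (Real.exp (-qm * s) - Real.exp (-qp * s)) / (qp - qm)
    let y : ℝ → ℝ := fun t => a * c *
      ∫ s in (0:ℝ)..t, x s ^ 2 *
        ((Real.exp (-qm * (t - s)) - Real.exp (-qp * (t - s))) / (qp - qm))
    let y1 : ℝ → ℝ := fun t => a * c *
      ∫ s in (0:ℝ)..t, x s ^ 2 *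
        ((-qm * Real.exp (-qm * (t - s)) + qp * Real.exp (-qp * (t - s))) / (qp - qm))
    y 0 = 0 ∧ y1 0 = 0 ∧
    (∀ t, HasDerivAt y (y1 t) t) ∧
    (∀ t, HasDerivAt y1 (a * c * x t ^ 2 - (b + c + d) * y1 t - (b * (c + d) - a * c) * y t) t) ∧
    Tendsto y atTop (𝓝 ((a * c / (b * (c + d))) / (1 - a * c / (b * (c + d))) ^ 3)) := by
  intro x y y1
  obtain ⟨hsum, hprod⟩ := add_eq_and_mul_eq_of_roots hlt.ne hqm hqp
  have hx : x = fun t => 1 + a * c * ((expConv qm 1 t - expConv qp 1 t) / (qp - qm)) :=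
    funext fun t => congrArg (1 + a * c * ·) (integral_exp_sub_exp_div_eq_expConv qm qp t)
  have hxc : Continuous x := by
    rw [hx]
    have hE := continuous_expConv continuous_one
    fun_prop
  have hxlim : Tendsto x atTop (𝓝 (1 + a * c * (1 / (qm * qp)))) := by
    rw [hx]
    exact ((tendsto_expConv_sub_div hqmpos hqppos hlt.ne continuous_one
      tendsto_const_nhds).const_mul _).const_add 1
  have hg : Continuous fun s => x s ^ 2 := hxc.pow 2
  have hy : y = fun t => a * c * ((expConv qm (x · ^ 2) t - expConv qp (x · ^ 2) t) / (qp - qm)) :=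
    funext fun t => congrArg (a * c * ·) (integral_mul_exp_sub_exp_div_eq_expConv hg qm qp t)
  have hy1 : y1 = fun t => a * c *
      ((-qm * expConv qm (x · ^ 2) t + qp * expConv qp (x · ^ 2) t) / (qp - qm)) :=
    funext fun t => congrArg (a * c * ·) (integral_mul_exp_combination_eq_expConv hg _ _ _ _ _ t)
  refine ⟨by simp [hy, expConv_zero], by simp [hy1, expConv_zero], fun t => ?_, fun t => ?_, ?_⟩
  · rw [hy, hy1]
    exact (hasDerivAt_expConv_sub_div hg t).const_mul (a * c)
  · rw [hy, hy1]
    refine ((hasDerivAt_neg_mul_expConv_add_div hg hlt.ne t).const_mul (a * c)).congr_deriv ?_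
    rw [← hsum, ← hprod]
    ring
  · rw [hy]
    convert (tendsto_expConv_sub_div hqmpos hqppos hlt.ne hg (hxlim.pow 2)).const_mul (a * c)
      using 2
    have hP : 0 < b * (c + d) := by positivity
    rw [hprod]
    field_simp [(sub_pos.2 hstab).ne']
    ring

theorem branching_variance_ode (a b c d qm qp : ℝ) (ha : 0 ≤ a) (hb : 0 < b) (hc : 0 < c)
    (hd : 0 ≤ d) (hstab : a * c < b * (c + d))
    (hqm : qm ^ 2 - (b + c + d) * qm + (b * (c + d) - a * c) = 0)
    (hqp : qp ^ 2 - (b + c + d) * qp + (b * (c + d) - a * c) = 0)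
    (hqmpos : 0 < qm) (hqppos : 0 < qp) (hlt : qm < qp) :
    let x : ℝ → ℝ := fun t => 1 + a * c *
      ∫ s in (0:ℝ)..t, (Real.exp (-qm * s) - Real.exp (-qp * s)) / (qp - qm)
    let y : ℝ → ℝ := fun t => a * c *
      ∫ s in (0:ℝ)..t, x s ^ 2 *
        ((Real.exp (-qm * (t - s)) - Real.exp (-qp * (t - s))) / (qp - qm))
    let y1 : ℝ → ℝ := fun t => a * c *
      ∫ s in (0:ℝ)..t, x s ^ 2 *
        ((-qm * Real.exp (-qm * (t - s)) + qp * Real.exp (-qp * (t - s))) / (qp - qm))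
    y 0 = 0 ∧ y1 0 = 0 ∧
    (∀ t, HasDerivAt y (y1 t) t) ∧
    (∀ t, HasDerivAt y1 (a * c * x t ^ 2 - (b + c + d) * y1 t - (b * (c + d) - a * c) * y t) t) ∧
    Tendsto y atTop (𝓝 ((a * c / (b * (c + d))) / (1 - a * c / (b * (c + d))) ^ 3)) :=
  branching_variance_ode_general a b c d qm qp hb hc hd hstab hqm hqp hqmpos hqppos hlt
end

section
/- Let $0<\nu<1$, $\theta_0=-\ln\nu+\nu-1$, and suppose $V_u(\theta)\le -\ln\nu$ for all $u\ge 0$ and $\theta\le\theta_0$. Then for $\theta\le\theta_0$, $\ln\mathbb{E}[e^{\theta N_t}]=\frac{\lambda_0 c}{c+d}\int_0^t(e^{V_u(\theta)}-1)(1-e^{-(c+d)(t-u)})du \le \frac{\lambda_0 c}{(c+d)^2}\cdot\frac{1-\nu}{\nu}\cdot\big((c+d)t-1+e^{-(c+d)t}\big)$. -/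
/-! Since `V u θ ≤ -log ν`, the factor `exp (V u θ) - 1` is at most `1/ν - 1` and the weight
`1 - exp (-(c + d) (t - u))` is nonnegative on `[0, t]`; so the integral is bounded by
`(1 - ν)/ν` times the integral of the weight, which is `t - (1 - exp (-(c + d) t))/(c + d)`. -/

open Real MeasureTheory Set

lemma integral_one_sub_exp_neg_mul_sub {K : ℝ} (hK : K ≠ 0) (t : ℝ) :
    ∫ u in (0:ℝ)..t, (1 - exp (-K * (t - u))) = t - (1 - exp (-K * t)) / K := by
  have hderiv : ∀ u, HasDerivAt (fun u => u - exp (-K * (t - u)) / K)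
      (1 - exp (-K * (t - u))) u := by
    intro u
    refine ((hasDerivAt_id' u).sub
      ((((hasDerivAt_id' u).const_sub t).const_mul (-K)).exp.div_const K)).congr_deriv ?_
    field_simp
  rw [intervalIntegral.integral_eq_sub_of_hasDerivAt (fun u _ => hderiv u)
    ((by fun_prop : Continuous fun u => 1 - exp (-K * (t - u))).intervalIntegrable _ _)]
  simp only [sub_self, mul_zero, exp_zero, sub_zero]
  ring

lemma exp_sub_one_le_of_le_neg_log {x ν : ℝ} (hν : 0 < ν) (hx : x ≤ -log ν) :
    exp x - 1 ≤ (1 - ν) / ν := by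
  have : exp x ≤ ν⁻¹ := by simpa [exp_neg, exp_log hν] using exp_le_exp.mpr hx
  rw [sub_div, div_self hν.ne', one_div]
  linarith

lemma intervalIntegral.integral_mul_le_const_mul_integral {f w : ℝ → ℝ} {a b B : ℝ}
    (hab : a ≤ b) (hfw : IntervalIntegrable (fun u => f u * w u) volume a b)
    (hw : IntervalIntegrable w volume a b) (hf : ∀ u ∈ Icc a b, f u ≤ B)
    (hw0 : ∀ u ∈ Icc a b, 0 ≤ w u) :
    ∫ u in a..b, f u * w u ≤ B * ∫ u in a..b, w u := by
  rw [← intervalIntegral.integral_const_mul]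
  exact intervalIntegral.integral_mono_on hab hfw (hw.const_mul B)
    fun u hu => mul_le_mul_of_nonneg_right (hf u hu) (hw0 u hu)

theorem cluster_mgf_bound_general (lam0 c d ν : ℝ) (hlam0 : 0 < lam0) (hc : 0 < c) (hd : 0 ≤ d)
    (h0 : 0 < ν) (V : ℝ → ℝ → ℝ)
    (hVcont : ∀ θ, Continuous fun u => V u θ)
    (hbound : ∀ u ≥ 0, ∀ θ ≤ -Real.log ν + ν - 1, V u θ ≤ -Real.log ν) :
    ∀ θ ≤ -Real.log ν + ν - 1, ∀ t ≥ 0,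
      lam0 * c / (c + d) *
        ∫ u in (0:ℝ)..t, (Real.exp (V u θ) - 1) * (1 - Real.exp (-(c + d) * (t - u))) ≤
      lam0 * c / (c + d) ^ 2 * ((1 - ν) / ν) *
        ((c + d) * t - 1 + Real.exp (-(c + d) * t)) := by
  intro θ hθ t ht
  have hK : 0 < c + d := by positivity
  have hVθ := hVcont θ
  have hweight : ∀ u ∈ Icc 0 t, 0 ≤ 1 - exp (-(c + d) * (t - u)) := fun u hu => by
    rw [sub_nonneg, exp_le_one_iff]
    nlinarith [hu.2]
  calc lam0 * c / (c + d) *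
        ∫ u in (0:ℝ)..t, (exp (V u θ) - 1) * (1 - exp (-(c + d) * (t - u)))
      ≤ lam0 * c / (c + d) * ((1 - ν) / ν * ∫ u in (0:ℝ)..t, (1 - exp (-(c + d) * (t - u)))) := by
        gcongr
        refine intervalIntegral.integral_mul_le_const_mul_integral ht ?_ ?_
          (fun u hu => exp_sub_one_le_of_le_neg_log h0 (hbound u hu.1 θ hθ)) hweight <;>
        exact Continuous.intervalIntegrable (by fun_prop) _ _
    _ = _ := by
        rw [integral_one_sub_exp_neg_mul_sub hK.ne']
        field_simp
        ring

theorem cluster_mgf_bound (lam0 c d ν : ℝ) (hlam0 : 0 < lam0) (hc : 0 < c) (hd : 0 ≤ d)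
    (h0 : 0 < ν) (h1 : ν < 1) (V : ℝ → ℝ → ℝ)
    (hVcont : ∀ θ, Continuous fun u => V u θ)
    (hbound : ∀ u ≥ 0, ∀ θ ≤ -Real.log ν + ν - 1, V u θ ≤ -Real.log ν) :
    ∀ θ ≤ -Real.log ν + ν - 1, ∀ t ≥ 0,
      lam0 * c / (c + d) *
        ∫ u in (0:ℝ)..t, (Real.exp (V u θ) - 1) * (1 - Real.exp (-(c + d) * (t - u))) ≤
      lam0 * c / (c + d) ^ 2 * ((1 - ν) / ν) *
        ((c + d) * t - 1 + Real.exp (-(c + d) * t)) :=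
  cluster_mgf_bound_general lam0 c d ν hlam0 hc hd h0 V hVcont hbound
end
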